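/- arXiv:1606.06103 — 2 statements merged into one kernel-verified Lean document; each statement's English description precedes it below -/
import Mathlib

section
/- (Chebyshev sieve.) Let 𝓐 be a finite set of cardinality N ≥ 1 and z ≥ 1 a real number. For each prime p ≤ z let 𝓐_p ⊆ 𝓐, and suppose given real numbers 0 ≤ δ_p < 1 and R_p with #𝓐_p = δ_p N + R_p; for distinct primes p, q ≤ z write #(𝓐_p ∩ 𝓐_q) = δ_p δ_q N + R_{p,q}, and set R_{p,p} = R_p. Let N(a) = #{p ≤ z : a ∈ 𝓐_p}, M(z) = (1/N)·Σ_{p ≤ z} #𝓐_p, U(z) = Σ_{p ≤ z} δ_p, and E(𝓐; z, M) = #{a ∈ 𝓐 : N(a) ≤ M}. If M(z) > 0, then E(𝓐; z, M(z)/2) ≤ (4N/M(z)²) · ( U(z) + (1/N)·Σ_{p,q ≤ z} |R_{p,q}| + (2U(z)/N)·Σ_{p ≤ z} |R_p| + ((1/N)·Σ_{p ≤ z} |R_p|)² ), where all sums run over primes p (and pairs of primes p, q, including p = q) at most z. -/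
/-!
Chebyshev's inequality for `N(a) = #{p ≤ z : a ∈ 𝓐_p}` on `𝓐`: its mean is `M(z)`, so each `a`
with `N(a) ≤ M(z)/2` contributes at least `M(z)²/4` to the variance `Σ_a N(a)² - N·M(z)²`.
Double counting gives `Σ_a N(a)² = Σ_{p,q} #(𝓐_p ∩ 𝓐_q)`, which the hypotheses bound by
`N·U(z)² + Σ_{p,q} |R_{p,q}| + N·U(z)`, while `N·M(z) = N·U(z) + Σ_p R_p` bounds `N·M(z)²`
below by `N·U(z)² - 2U(z)·Σ_p |R_p|`.
-/

open scoped Classical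

noncomputable def primesUpTo (z : ℝ) : Finset ℕ :=
  (Finset.range (⌊z⌋₊ + 1)).filter Nat.Prime

open Finset

namespace Finset

variable {α ι : Type*}

theorem card_filter_le_mul_sq_le_sum_sq_sub (A : Finset α) (f : α → ℝ) {t c : ℝ} (htc : t ≤ c) :
    #{a ∈ A | f a ≤ t} * (c - t) ^ 2 ≤ ∑ a ∈ A, (f a - c) ^ 2 := by
  calc (#{a ∈ A | f a ≤ t} : ℝ) * (c - t) ^ 2
      ≤ ∑ a ∈ A with f a ≤ t, (f a - c) ^ 2 := by
        rw [← nsmul_eq_mul]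
        refine card_nsmul_le_sum _ _ _ fun a ha => ?_
        have hfa : f a ≤ t := (mem_filter.mp ha).2
        nlinarith
    _ ≤ ∑ a ∈ A, (f a - c) ^ 2 :=
        sum_le_sum_of_subset_of_nonneg (filter_subset _ _) fun a _ _ => sq_nonneg _

theorem sum_sub_mean_sq {A : Finset α} {f : α → ℝ} {m : ℝ} (hmean : ∑ a ∈ A, f a = #A * m) :
    ∑ a ∈ A, (f a - m) ^ 2 = ∑ a ∈ A, f a ^ 2 - #A * m ^ 2 := by
  simp only [sub_sq, sum_add_distrib, sum_sub_distrib, ← sum_mul, ← mul_sum, hmean, sum_const,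
    nsmul_eq_mul]
  ring

theorem sum_card_filter_mem {A : Finset α} {P : Finset ι} {S : ι → Finset α}
    (hS : ∀ p ∈ P, S p ⊆ A) : ∑ a ∈ A, #{p ∈ P | a ∈ S p} = ∑ p ∈ P, #(S p) := by
  calc ∑ a ∈ A, #{p ∈ P | a ∈ S p} = ∑ p ∈ P, #{a ∈ A | a ∈ S p} :=
        sum_card_bipartiteAbove_eq_sum_card_bipartiteBelow (fun a p => a ∈ S p)
    _ = ∑ p ∈ P, #(S p) :=
        sum_congr rfl fun p hp => by rw [filter_mem_eq_inter, inter_eq_right.mpr (hS p hp)]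

theorem sum_card_filter_mem_sq {A : Finset α} {P : Finset ι} {S : ι → Finset α}
    (hS : ∀ p ∈ P, S p ⊆ A) :
    ∑ a ∈ A, #{p ∈ P | a ∈ S p} ^ 2 = ∑ p ∈ P, ∑ q ∈ P, #(S p ∩ S q) := by
  have hsq : ∀ a, #{p ∈ P | a ∈ S p} ^ 2 = #{x ∈ P ×ˢ P | a ∈ S x.1 ∩ S x.2} := by
    intro a
    rw [sq, ← card_product, ← filter_product]
    congr 1
    ext x
    simp
  simp only [hsq]
  rw [sum_card_filter_mem fun x hx => inter_subset_left.trans (hS x.1 (mem_product.mp hx).1),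
    sum_product]

end Finset

section Sieve

variable {α ι : Type*} {A : Finset α} {P : Finset ι} {S : ι → Finset α} {δ R : ι → ℝ}

theorem sum_sum_card_inter_le {Rpq : ι → ι → ℝ}
    (hR : ∀ p ∈ P, (#(S p) : ℝ) = δ p * #A + R p)
    (hRpq : ∀ p ∈ P, ∀ q ∈ P, p ≠ q → (#(S p ∩ S q) : ℝ) = δ p * δ q * #A + Rpq p q)
    (hRpp : ∀ p ∈ P, Rpq p p = R p) :
    ∑ p ∈ P, ∑ q ∈ P, (#(S p ∩ S q) : ℝ)
      ≤ #A * (∑ p ∈ P, δ p) ^ 2 + ∑ p ∈ P, ∑ q ∈ P, |Rpq p q| + #A * ∑ p ∈ P, δ p := by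
  have hterm : ∀ p ∈ P, ∀ q ∈ P, (#(S p ∩ S q) : ℝ)
      ≤ δ p * δ q * #A + |Rpq p q| + if p = q then δ p * #A else 0 := by
    intro p hp q hq
    by_cases hpq : p = q
    · subst hpq
      rw [inter_self, hR p hp, hRpp p hp, if_pos rfl]
      linarith [le_abs_self (R p), mul_nonneg (mul_self_nonneg (δ p)) (#A).cast_nonneg (α := ℝ)]
    · rw [hRpq p hp q hq hpq, if_neg hpq]
      linarith [le_abs_self (Rpq p q)]
  calc ∑ p ∈ P, ∑ q ∈ P, (#(S p ∩ S q) : ℝ)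
      ≤ ∑ p ∈ P, ∑ q ∈ P, (δ p * δ q * #A + |Rpq p q| + if p = q then δ p * #A else 0) :=
        sum_le_sum fun p hp => sum_le_sum fun q hq => hterm p hp q hq
    _ = #A * (∑ p ∈ P, δ p) ^ 2 + ∑ p ∈ P, ∑ q ∈ P, |Rpq p q| + #A * ∑ p ∈ P, δ p := by
        simp only [sum_add_distrib, sum_ite_eq, ← sum_mul, ← mul_sum, sq, sum_ite_mem, inter_self]
        ring

theorem card_mul_sq_sum_sub_le (hA : 0 < #A) (hδ : ∀ p ∈ P, 0 ≤ δ p)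
    (hR : ∀ p ∈ P, (#(S p) : ℝ) = δ p * #A + R p) :
    #A * (∑ p ∈ P, δ p) ^ 2 - 2 * (∑ p ∈ P, δ p) * ∑ p ∈ P, |R p|
      ≤ #A * ((∑ p ∈ P, (#(S p) : ℝ)) / #A) ^ 2 := by
  set N : ℝ := (#A : ℝ)
  set U := ∑ p ∈ P, δ p
  set SR := ∑ p ∈ P, R p
  have hN : 0 < N := Nat.cast_pos.mpr hA
  have hsum : ∑ p ∈ P, (#(S p) : ℝ) = N * U + SR := by
    rw [mul_sum, ← sum_add_distrib]
    exact sum_congr rfl fun p hp => by rw [hR p hp]; ring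
  have hexpand : N * ((N * U + SR) / N) ^ 2 = N * U ^ 2 + 2 * U * SR + SR ^ 2 / N := by
    field_simp
    ring
  have hU : 0 ≤ U := sum_nonneg hδ
  have hSR : -∑ p ∈ P, |R p| ≤ SR := neg_le_of_abs_le (abs_sum_le_sum_abs _ _)
  rw [hsum, hexpand]
  nlinarith [div_nonneg (sq_nonneg SR) hN.le]

end Sieve

theorem chebyshev_sieve_general {α : Type*} (A : Finset α) (hA : 1 ≤ A.card)
    (z : ℝ)
    (Ap : ℕ → Finset α) (hAp : ∀ p ∈ primesUpTo z, Ap p ⊆ A)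
    (δ R : ℕ → ℝ)
    (hδ0 : ∀ p ∈ primesUpTo z, 0 ≤ δ p)
    (hR : ∀ p ∈ primesUpTo z, ((Ap p).card : ℝ) = δ p * A.card + R p)
    (Rpq : ℕ → ℕ → ℝ)
    (hRpq : ∀ p ∈ primesUpTo z, ∀ q ∈ primesUpTo z, p ≠ q →
      (((Ap p ∩ Ap q).card : ℝ)) = δ p * δ q * A.card + Rpq p q)
    (hRpp : ∀ p ∈ primesUpTo z, Rpq p p = R p)
    (M : ℝ) (hM : M = (∑ p ∈ primesUpTo z, ((Ap p).card : ℝ)) / A.card)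
    (hMpos : 0 < M) :
    (Nat.card {a : α // a ∈ A ∧
        (((primesUpTo z).filter (fun p => a ∈ Ap p)).card : ℝ) ≤ M / 2} : ℝ)
      ≤ 4 * A.card / M ^ 2 *
        ((∑ p ∈ primesUpTo z, δ p)
          + (1 / A.card) * ∑ p ∈ primesUpTo z, ∑ q ∈ primesUpTo z, |Rpq p q|
          + (2 * (∑ p ∈ primesUpTo z, δ p) / A.card) * ∑ p ∈ primesUpTo z, |R p|
          + ((1 / A.card) * ∑ p ∈ primesUpTo z, |R p|) ^ 2) := by
  set P := primesUpTo z
  let f : α → ℝ := fun a => (#{p ∈ P | a ∈ Ap p} : ℝ)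
  have hN : (0 : ℝ) < #A := by exact_mod_cast hA
  have hmean : ∑ a ∈ A, f a = #A * M := by
    rw [hM, mul_div_cancel₀ _ hN.ne', ← Nat.cast_sum, sum_card_filter_mem hAp, Nat.cast_sum]
  have hsecond : ∑ a ∈ A, f a ^ 2 ≤ #A * (∑ p ∈ P, δ p) ^ 2 + ∑ p ∈ P, ∑ q ∈ P, |Rpq p q|
      + #A * ∑ p ∈ P, δ p :=
    calc ∑ a ∈ A, f a ^ 2 = ∑ p ∈ P, ∑ q ∈ P, (#(Ap p ∩ Ap q) : ℝ) := by
          simp only [f]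
          exact_mod_cast sum_card_filter_mem_sq hAp
      _ ≤ _ := sum_sum_card_inter_le hR hRpq hRpp
  have hlower := hM ▸ card_mul_sq_sum_sub_le hA hδ0 hR
  have hcheb := card_filter_le_mul_sq_le_sum_sq_sub A f (half_le_self hMpos.le)
  rw [sum_sub_mean_sq hmean] at hcheb
  have hcard : Nat.card {a : α // a ∈ A ∧ f a ≤ M / 2} = #{a ∈ A | f a ≤ M / 2} := by
    rw [← Nat.card_eq_finsetCard]
    simp
  rw [show Nat.card _ = _ from hcard]
  set U := ∑ p ∈ P, δ p
  set S₁ := ∑ p ∈ P, |R p|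
  set S₂ := ∑ p ∈ P, ∑ q ∈ P, |Rpq p q|
  have hkey : #{a ∈ A | f a ≤ M / 2} * (M ^ 2 / 4) ≤ #A * U + S₂ + 2 * U * S₁ + S₁ ^ 2 / #A := by
    have := div_nonneg (sq_nonneg S₁) hN.le
    nlinarith
  calc (#{a ∈ A | f a ≤ M / 2} : ℝ) = #{a ∈ A | f a ≤ M / 2} * (M ^ 2 / 4) * 4 / M ^ 2 := by
        rw [eq_div_iff (by positivity)]
        ring
    _ ≤ (#A * U + S₂ + 2 * U * S₁ + S₁ ^ 2 / #A) * 4 / M ^ 2 := by gcongr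
    _ = _ := by
        field_simp

/-- **Lemma 3.1 (the Chebyshev sieve).** Let `𝓐` be a finite set of cardinality
`N ≥ 1`, `z ≥ 1`, and for each prime `p ≤ z` let `𝓐_p ⊆ 𝓐` with
`#𝓐_p = δ_p N + R_p` (`0 ≤ δ_p < 1`), and for `p ≠ q`,
`#(𝓐_p ∩ 𝓐_q) = δ_p δ_q N + R_{p,q}`, with `R_{p,p} = R_p`.  With
`N(a) = #{p ≤ z : a ∈ 𝓐_p}`, `M(z) = (1/N)Σ_{p ≤ z} #𝓐_p > 0` and
`U(z) = Σ_{p ≤ z} δ_p`, the number of `a ∈ 𝓐` with `N(a) ≤ M(z)/2` is at most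
`(4N/M(z)²)(U(z) + (1/N)Σ_{p,q}|R_{p,q}| + (2U(z)/N)Σ_p|R_p| + ((1/N)Σ_p|R_p|)²)`. -/
theorem chebyshev_sieve {α : Type*} (A : Finset α) (hA : 1 ≤ A.card)
    (z : ℝ) (hz : 1 ≤ z)
    (Ap : ℕ → Finset α) (hAp : ∀ p ∈ primesUpTo z, Ap p ⊆ A)
    (δ R : ℕ → ℝ)
    (hδ0 : ∀ p ∈ primesUpTo z, 0 ≤ δ p) (hδ1 : ∀ p ∈ primesUpTo z, δ p < 1)
    (hR : ∀ p ∈ primesUpTo z, ((Ap p).card : ℝ) = δ p * A.card + R p)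
    (Rpq : ℕ → ℕ → ℝ)
    (hRpq : ∀ p ∈ primesUpTo z, ∀ q ∈ primesUpTo z, p ≠ q →
      (((Ap p ∩ Ap q).card : ℝ)) = δ p * δ q * A.card + Rpq p q)
    (hRpp : ∀ p ∈ primesUpTo z, Rpq p p = R p)
    (M : ℝ) (hM : M = (∑ p ∈ primesUpTo z, ((Ap p).card : ℝ)) / A.card)
    (hMpos : 0 < M) :
    (Nat.card {a : α // a ∈ A ∧
        (((primesUpTo z).filter (fun p => a ∈ Ap p)).card : ℝ) ≤ M / 2} : ℝ)
      ≤ 4 * A.card / M ^ 2 *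
        ((∑ p ∈ primesUpTo z, δ p)
          + (1 / A.card) * ∑ p ∈ primesUpTo z, ∑ q ∈ primesUpTo z, |Rpq p q|
          + (2 * (∑ p ∈ primesUpTo z, δ p) / A.card) * ∑ p ∈ primesUpTo z, |R p|
          + ((1 / A.card) * ∑ p ∈ primesUpTo z, |R p|) ^ 2) :=
  chebyshev_sieve_general A hA z Ap hAp δ R hδ0 hR Rpq hRpq hRpp M hM hMpos
end

section
/- Let 𝓐 be a finite set of cardinality N ≥ 1 and z ≥ 1 a real number. For each prime p ≤ z let 𝓐_p ⊆ 𝓐, and suppose given real numbers 0 ≤ δ_p < 1 and R_p with #𝓐_p = δ_p N + R_p; for distinct primes p, q ≤ z write #(𝓐_p ∩ 𝓐_q) = δ_p δ_q N + R_{p,q}, and set R_{p,p} = R_p. Let N(a) = #{p ≤ z : a ∈ 𝓐_p}, M(z) = (1/N)·Σ_{p ≤ z} #𝓐_p, and U(z) = Σ_{p ≤ z} δ_p. Then (1/N)·Σ_{a ∈ 𝓐} (N(a) − M(z))² ≤ U(z) + (1/N)·Σ_{p,q ≤ z} |R_{p,q}| + 2U(z)·((1/N)·Σ_{p ≤ z}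 |R_p|) + ((1/N)·Σ_{p ≤ z} |R_p|)². -/
/-!
Write `N(a) = Σ_p 1[a ∈ 𝓐_p]`. Double counting gives `Σ_a N(a) = Σ_p #𝓐_p = N·M` and
`Σ_a N(a)² = Σ_{p,q} #(𝓐_p ∩ 𝓐_q)`, so the variance is `(1/N) Σ_{p,q} #(𝓐_p ∩ 𝓐_q) − M²`.
The remainder terms bound the double sum by `N U² + Σ_{p,q} |R_{p,q}| + N U`, the last term
coming from the diagonal, where `#(𝓐_p ∩ 𝓐_p) = δ_p N + R_p` rather than `δ_p² N + R_{p,p}`.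
Finally `M = U + (1/N) Σ_p R_p`, so `U² − M²` is at most `2 U E + E²` with `E = (1/N) Σ_p |R_p|`.
-/

open scoped Classical

open Finset

section SetSystem

variable {α ι : Type*} {A : Finset α} {P : Finset ι} {S : ι → Finset α} {δ : ι → ℝ}
  {R : ι → ι → ℝ}

theorem sum_card_filter_mem_eq_sum_card (hS : ∀ p ∈ P, S p ⊆ A) :
    ∑ a ∈ A, #{p ∈ P | a ∈ S p} = ∑ p ∈ P, #(S p) := by
  calc ∑ a ∈ A, #{p ∈ P | a ∈ S p} = ∑ p ∈ P, #{a ∈ A | a ∈ S p} :=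
        sum_card_bipartiteAbove_eq_sum_card_bipartiteBelow (fun a p => a ∈ S p)
    _ = ∑ p ∈ P, #(S p) := sum_congr rfl fun p hp => by
        rw [filter_mem_eq_inter, inter_eq_right.mpr (hS p hp)]

theorem card_filter_mem_sq (a : α) :
    #{p ∈ P | a ∈ S p} ^ 2 = #{pq ∈ P ×ˢ P | a ∈ S pq.1 ∩ S pq.2} := by
  rw [sq, ← card_product, ← filter_product]
  simp only [mem_inter]

theorem sum_card_filter_mem_sq_eq_sum_card_inter (hS : ∀ p ∈ P, S p ⊆ A) :
    ∑ a ∈ A, #{p ∈ P | a ∈ S p} ^ 2 = ∑ p ∈ P, ∑ q ∈ P, #(S p ∩ S q) := by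
  simp_rw [card_filter_mem_sq]
  rw [sum_card_filter_mem_eq_sum_card (S := fun pq : ι × ι => S pq.1 ∩ S pq.2), sum_product]
  exact fun pq hpq => inter_subset_left.trans (hS pq.1 (mem_product.mp hpq).1)

theorem card_inter_le_of_remainders (hδ : ∀ p ∈ P, 0 ≤ δ p)
    (hdiag : ∀ p ∈ P, (#(S p) : ℝ) = δ p * #A + R p p)
    (hoff : ∀ p ∈ P, ∀ q ∈ P, p ≠ q → (#(S p ∩ S q) : ℝ) = δ p * δ q * #A + R p q)
    {p q : ι} (hp : p ∈ P) (hq : q ∈ P) :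
    (#(S p ∩ S q) : ℝ) ≤ δ p * δ q * #A + |R p q| + if p = q then δ p * #A else 0 := by
  by_cases hpq : p = q
  · subst hpq
    rw [if_pos rfl, inter_self, hdiag p hp]
    have : 0 ≤ δ p * δ p * #A := by have := hδ p hp; positivity
    linarith [le_abs_self (R p p)]
  · rw [hoff p hp q hq hpq, if_neg hpq]
    linarith [le_abs_self (R p q)]

theorem sum_card_inter_le_of_remainders (hδ : ∀ p ∈ P, 0 ≤ δ p)
    (hdiag : ∀ p ∈ P, (#(S p) : ℝ) = δ p * #A + R p p)
    (hoff : ∀ p ∈ P, ∀ q ∈ P, p ≠ q → (#(S p ∩ S q) : ℝ) = δ p * δ q * #A + R p q) :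
    ∑ p ∈ P, ∑ q ∈ P, (#(S p ∩ S q) : ℝ)
      ≤ (∑ p ∈ P, δ p) ^ 2 * #A + ∑ p ∈ P, ∑ q ∈ P, |R p q| + (∑ p ∈ P, δ p) * #A := by
  calc ∑ p ∈ P, ∑ q ∈ P, (#(S p ∩ S q) : ℝ)
      ≤ ∑ p ∈ P, ∑ q ∈ P, (δ p * δ q * #A + |R p q| + if p = q then δ p * #A else 0) :=
        sum_le_sum fun p hp => sum_le_sum fun q hq =>
          card_inter_le_of_remainders hδ hdiag hoff hp hq
    _ = _ := by
        rw [sq, sum_mul_sum]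
        simp only [sum_add_distrib, sum_ite_eq, sum_ite_mem, inter_self, sum_mul]

end SetSystem

theorem sum_sub_sq_eq_sum_sq_sub {α K : Type*} [CommRing K] (s : Finset α) (f : α → K) {m : K}
    (hm : ∑ a ∈ s, f a = #s * m) :
    ∑ a ∈ s, (f a - m) ^ 2 = ∑ a ∈ s, f a ^ 2 - #s * m ^ 2 := by
  simp_rw [sub_sq, sum_add_distrib, sum_sub_distrib, ← sum_mul, ← mul_sum, hm, sum_const,
    nsmul_eq_mul]
  ring

theorem sq_sub_sq_add_le {U s e : ℝ} (hU : 0 ≤ U) (hs : |s| ≤ e) :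
    U ^ 2 - (U + s) ^ 2 ≤ 2 * U * e + e ^ 2 := by
  nlinarith [neg_abs_le s, abs_nonneg s, sq_nonneg s]

theorem chebyshev_sieve_variance_general {α : Type*} (A : Finset α) (hA : 1 ≤ A.card)
    (z : ℝ)
    (Ap : ℕ → Finset α) (hAp : ∀ p ∈ primesUpTo z, Ap p ⊆ A)
    (δ R : ℕ → ℝ)
    (hδ0 : ∀ p ∈ primesUpTo z, 0 ≤ δ p)
    (hR : ∀ p ∈ primesUpTo z, ((Ap p).card : ℝ) = δ p * A.card + R p)
    (Rpq : ℕ → ℕ → ℝ)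
    (hRpq : ∀ p ∈ primesUpTo z, ∀ q ∈ primesUpTo z, p ≠ q →
      (((Ap p ∩ Ap q).card : ℝ)) = δ p * δ q * A.card + Rpq p q)
    (hRpp : ∀ p ∈ primesUpTo z, Rpq p p = R p)
    (M : ℝ) (hM : M = (∑ p ∈ primesUpTo z, ((Ap p).card : ℝ)) / A.card) :
    (1 / A.card) * ∑ a ∈ A,
        ((((primesUpTo z).filter (fun p => a ∈ Ap p)).card : ℝ) - M) ^ 2
      ≤ (∑ p ∈ primesUpTo z, δ p)
          + (1 / A.card) * ∑ p ∈ primesUpTo z, ∑ q ∈ primesUpTo z, |Rpq p q|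
          + 2 * (∑ p ∈ primesUpTo z, δ p) *
              ((1 / A.card) * ∑ p ∈ primesUpTo z, |R p|)
          + ((1 / A.card) * ∑ p ∈ primesUpTo z, |R p|) ^ 2 := by
  set P := primesUpTo z
  set N : ℝ := (#A : ℝ)
  have hN : 0 < N := by simpa [N] using hA
  set U := ∑ p ∈ P, δ p
  have hmean : M = U + (1 / N) * ∑ p ∈ P, R p := by
    rw [hM, sum_congr rfl hR, sum_add_distrib, ← sum_mul]
    field_simp
    ring
  have hfirst : ∑ a ∈ A, (#{p ∈ P | a ∈ Ap p} : ℝ) = N * M := by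
    rw [hM, mul_div_cancel₀ _ hN.ne']
    exact_mod_cast sum_card_filter_mem_eq_sum_card hAp
  have hsecond : ∑ a ∈ A, (#{p ∈ P | a ∈ Ap p} : ℝ) ^ 2
      ≤ U ^ 2 * N + ∑ p ∈ P, ∑ q ∈ P, |Rpq p q| + U * N := by
    have hcount : ∑ a ∈ A, (#{p ∈ P | a ∈ Ap p} : ℝ) ^ 2
        = ∑ p ∈ P, ∑ q ∈ P, (#(Ap p ∩ Ap q) : ℝ) := by
      exact_mod_cast sum_card_filter_mem_sq_eq_sum_card_inter hAp
    rw [hcount]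
    exact sum_card_inter_le_of_remainders hδ0 (fun p hp => hRpp p hp ▸ hR p hp) hRpq
  have herror : |(1 / N) * ∑ p ∈ P, R p| ≤ (1 / N) * ∑ p ∈ P, |R p| := by
    rw [abs_mul, abs_of_pos (by positivity)]
    gcongr
    exact abs_sum_le_sum_abs _ _
  have hM2 := sq_sub_sq_add_le (sum_nonneg hδ0) herror
  rw [← hmean] at hM2
  rw [sum_sub_sq_eq_sum_sq_sub A _ hfirst]
  calc 1 / N * (∑ a ∈ A, (#{p ∈ P | a ∈ Ap p} : ℝ) ^ 2 - N * M ^ 2)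
      = 1 / N * ∑ a ∈ A, (#{p ∈ P | a ∈ Ap p} : ℝ) ^ 2 - M ^ 2 := by
        field_simp
    _ ≤ 1 / N * (U ^ 2 * N + ∑ p ∈ P, ∑ q ∈ P, |Rpq p q| + U * N) - M ^ 2 := by
        gcongr
    _ = U + 1 / N * ∑ p ∈ P, ∑ q ∈ P, |Rpq p q| + (U ^ 2 - M ^ 2) := by
        field_simp
        ring
    _ ≤ _ := by linarith

/-- **The variance bound (inequality (3.2)) in the proof of the Chebyshev sieve.**
With the notation of the Chebyshev sieve,
`(1/N)Σ_{a∈𝓐}(N(a) − M(z))² ≤ U(z) + (1/N)Σ_{p,q}|R_{p,q}| + 2U(z)(1/N)Σ_p|R_p|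
 + ((1/N)Σ_p|R_p|)²`. -/
theorem chebyshev_sieve_variance {α : Type*} (A : Finset α) (hA : 1 ≤ A.card)
    (z : ℝ) (hz : 1 ≤ z)
    (Ap : ℕ → Finset α) (hAp : ∀ p ∈ primesUpTo z, Ap p ⊆ A)
    (δ R : ℕ → ℝ)
    (hδ0 : ∀ p ∈ primesUpTo z, 0 ≤ δ p) (hδ1 : ∀ p ∈ primesUpTo z, δ p < 1)
    (hR : ∀ p ∈ primesUpTo z, ((Ap p).card : ℝ) = δ p * A.card + R p)
    (Rpq : ℕ → ℕ → ℝ)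
    (hRpq : ∀ p ∈ primesUpTo z, ∀ q ∈ primesUpTo z, p ≠ q →
      (((Ap p ∩ Ap q).card : ℝ)) = δ p * δ q * A.card + Rpq p q)
    (hRpp : ∀ p ∈ primesUpTo z, Rpq p p = R p)
    (M : ℝ) (hM : M = (∑ p ∈ primesUpTo z, ((Ap p).card : ℝ)) / A.card) :
    (1 / A.card) * ∑ a ∈ A,
        ((((primesUpTo z).filter (fun p => a ∈ Ap p)).card : ℝ) - M) ^ 2
      ≤ (∑ p ∈ primesUpTo z, δ p)
          + (1 / A.card) * ∑ p ∈ primesUpTo z, ∑ q ∈ primesUpTo z, |Rpq p q|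
          + 2 * (∑ p ∈ primesUpTo z, δ p) *
              ((1 / A.card) * ∑ p ∈ primesUpTo z, |R p|)
          + ((1 / A.card) * ∑ p ∈ primesUpTo z, |R p|) ^ 2 :=
  chebyshev_sieve_variance_general A hA z Ap hAp δ R hδ0 hR Rpq hRpq hRpp M hM
end
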